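/- Let n = 2r+1 ≥ 5 be odd and let G be the cycle graph on vertices {1,…,n} with edges (i,i+1) for 1 ≤ i ≤ n−1 together with (n,1). Partition the edges as E_1 = {(1,2),(3,4),…,(2r−1,2r)}, E_3 = {(2r+1,1)}, and E_2 = E ∖ (E_1 ∪ E_3). If a sequence of matchings (M_1,…,M_k) with M_i ∩ M_{i+1} = ∅ for all 1 ≤ i < k solves the instance (G,C), then there exists an (E_1,E_3,E_2,E_3)-alternating sequence of matchings of length at most 2k+1 — meaning the matchings in positions 4j+1 are subsets of E_1, those in positions 4j+3 are subsets of E_2, and those in even positions are subsets of E_3 — that also solves (G,C). -/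

import Mathlib

/-- A matching of the graph `G`, encoded as an involution of the vertex set that
moves vertices only along edges of `G`. -/
def IsMatchingPerm {V : Type*} (G : SimpleGraph V) (m : V → V) : Prop :=
  Function.Involutive m ∧ ∀ v, m v = v ∨ G.Adj v (m v)

/-- The configuration obtained from `C` by applying the sequence of matchings
`ms = [M₁, …, M_k]` (with `M₁` applied first):  `M_k ⋯ M₁ C = C ∘ m₁ ∘ ⋯ ∘ m_k`,
where `(M C)(v) = C (m v)`. -/
def routeSeq {V : Type*} (C : V → V) (ms : List (V → V)) : V → V :=
  C ∘ ms.foldr (· ∘ ·) id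

/-- The sequence of matchings `ms = (M₁, …, M_k)` solves the instance `(G, C)`,
i.e. `M_k ⋯ M₁ C = Id`. -/
def Solves {V : Type*} (G : SimpleGraph V) (C : V → V) (ms : List (V → V)) : Prop :=
  (∀ m ∈ ms, IsMatchingPerm G m) ∧ routeSeq C ms = id

/-- The cycle graph on vertices `{0, …, n-1}` (representing `{1, …, n}`),
with edges `(i, i+1)` for `i < n-1` together with `(n-1, 0)`. -/
def cycleGraph (n : ℕ) : SimpleGraph (Fin n) :=
  SimpleGraph.fromRel fun i j => (i.val + 1) % n = j.val

/-- `m` is a matching contained in `E₁ = {(1,2), (3,4), …, (2r-1, 2r)}` (1-indexed;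
0-indexed the left endpoints are the even numbers `0, 2, …, 2r-2 = n-3`). -/
def SubE1 (n : ℕ) (m : Fin n → Fin n) : Prop :=
  Function.Involutive m ∧ ∀ v : Fin n, m v = v ∨
    (v.val % 2 = 0 ∧ (m v).val = v.val + 1) ∨ ((m v).val % 2 = 0 ∧ v.val = (m v).val + 1)

/-- `m` is a matching contained in `E₂ = E ∖ (E₁ ∪ E₃) = {(2,3), (4,5), …, (2r, 2r+1)}`
(1-indexed; 0-indexed the left endpoints are odd). -/
def SubE2 (n : ℕ) (m : Fin n → Fin n) : Prop :=
  Function.Involutive m ∧ ∀ v : Fin n, m v = v ∨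
    (v.val % 2 = 1 ∧ (m v).val = v.val + 1) ∨ ((m v).val % 2 = 1 ∧ v.val = (m v).val + 1)

/-- `m` is a matching contained in `E₃ = {(2r+1, 1)}`, the wrap edge (0-indexed
`(n-1, 0)`). -/
def SubE3 (n : ℕ) (m : Fin n → Fin n) : Prop :=
  Function.Involutive m ∧ ∀ v : Fin n, m v = v ∨
    (v.val = n - 1 ∧ (m v).val = 0) ∨ (v.val = 0 ∧ (m v).val = n - 1)

/-!
Each edge of the cycle lies in exactly one of the matchings `E₁`, `E₂`, `E₃`, so every matching
`M` of the solution factors as `M⁽¹⁾ M⁽³⁾ M⁽²⁾` and as `M⁽²⁾ M⁽³⁾ M⁽¹⁾`, where `M⁽ʲ⁾` is its part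
on `Eⱼ`. Using the two factorisations alternately, the route becomes
`M₁⁽¹⁾, M₁⁽³⁾, M₁⁽²⁾ M₂⁽²⁾, M₂⁽³⁾, M₂⁽¹⁾ M₃⁽¹⁾, …`, of length `2k + 1`. Since consecutive `Mᵢ`
share no edge and each `Eⱼ` is a matching, the two factors of a merged entry move disjoint sets
of vertices, so their product is again a matching inside `Eⱼ`.
-/

section MatchingDecomposition

open SimpleGraph

variable {V : Type*} {G H E₁ E₂ E₃ : SimpleGraph V} {f g m m' p : V → V} {v : V}

open Classical in
noncomputable def restrictEdges (H : SimpleGraph V) (m : V → V) : V → V :=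
  fun v => if H.Adj v (m v) then m v else v

def NoCommonEdge (m m' : V → V) : Prop :=
  ∀ v, m v = v ∨ m' v ≠ m v

lemma restrictEdges_of_adj (h : H.Adj v (m v)) : restrictEdges H m v = m v := if_pos h

lemma restrictEdges_of_not_adj (h : ¬ H.Adj v (m v)) : restrictEdges H m v = v := if_neg h

lemma restrictEdges_of_eq (h : m v = v) : restrictEdges H m v = v := by
  by_cases hv : H.Adj v (m v)
  · rw [restrictEdges_of_adj hv, h]
  · exact restrictEdges_of_not_adj hv

lemma restrictEdges_apply_of_not_adj (hm : Function.Involutive m) (h : ¬ H.Adj v (m v)) :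
    restrictEdges H m (m v) = m v :=
  restrictEdges_of_not_adj fun h' => h (by rw [hm v] at h'; exact h'.symm)

lemma IsMatchingPerm.mono (hHG : H ≤ G) (hm : IsMatchingPerm H m) : IsMatchingPerm G m :=
  ⟨hm.1, fun v => (hm.2 v).imp_right fun h => hHG h⟩

lemma isMatchingPerm_restrictEdges (hm : Function.Involutive m) :
    IsMatchingPerm H (restrictEdges H m) := by
  refine ⟨fun v => ?_, fun v => ?_⟩
  · by_cases h : H.Adj v (m v)
    · have h' : H.Adj (m v) (m (m v)) := by rw [hm v]; exact h.symm
      rw [restrictEdges_of_adj h, restrictEdges_of_adj h', hm v]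
    · rw [restrictEdges_of_not_adj h, restrictEdges_of_not_adj h]
  · by_cases h : H.Adj v (m v)
    · exact Or.inr (by rwa [restrictEdges_of_adj h])
    · exact Or.inl (restrictEdges_of_not_adj h)

lemma IsMatchingPerm.comp (hf : IsMatchingPerm H f) (hg : IsMatchingPerm H g)
    (hfg : ∀ v, f v = v ∨ g v = v) : IsMatchingPerm H (f ∘ g) := by
  have hf_fix : ∀ v, g v ≠ v → f (g v) = g v := fun v hv =>
    (hfg (g v)).resolve_right fun h => hv (by rw [← h, hg.1 v])
  have hg_fix : ∀ v, f v ≠ v → g (f v) = f v := fun v hv =>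
    (hfg (f v)).resolve_left fun h => hv (by rw [← h, hf.1 v])
  refine ⟨fun v => ?_, fun v => ?_⟩
  · by_cases hgv : g v = v
    · by_cases hfv : f v = v
      · simp only [Function.comp_apply, hgv, hfv]
      · simp only [Function.comp_apply, hgv, hg_fix v hfv, hf.1 v]
    · simp only [Function.comp_apply, hf_fix v hgv, hg.1 v, (hfg v).resolve_right hgv]
  · by_cases hgv : g v = v
    · simpa only [Function.comp_apply, hgv] using hf.2 v
    · simpa only [Function.comp_apply, hf_fix v hgv] using hg.2 v

lemma NoCommonEdge.restrictEdges (hH : ∀ v, (H.neighborSet v).Subsingleton)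
    (hmm' : NoCommonEdge m m') (v : V) :
    restrictEdges H m v = v ∨ restrictEdges H m' v = v := by
  by_cases h : H.Adj v (m v)
  · by_cases h' : H.Adj v (m' v)
    · have hpartner : m v = m' v := hH v h h'
      refine Or.inl ?_
      rw [restrictEdges_of_adj h]
      exact (hmm' v).resolve_right (not_not.2 hpartner.symm)
    · exact Or.inr (restrictEdges_of_not_adj h')
  · exact Or.inl (restrictEdges_of_not_adj h)

lemma restrictEdges_comp_comp (h₁₂ : Disjoint E₁ E₂) (h₁₃ : Disjoint E₁ E₃)
    (h₂₃ : Disjoint E₂ E₃) (hm : IsMatchingPerm (E₁ ⊔ E₂ ⊔ E₃) m) :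
    restrictEdges E₁ m ∘ restrictEdges E₃ m ∘ restrictEdges E₂ m = m := by
  funext v
  simp only [Function.comp_apply]
  rcases hm.2 v with hv | (hv | hv) | hv
  · rw [restrictEdges_of_eq hv, restrictEdges_of_eq hv, restrictEdges_of_eq hv, hv]
  · rw [restrictEdges_of_not_adj (disjoint_left.1 h₁₂ v _ hv),
      restrictEdges_of_not_adj (disjoint_left.1 h₁₃ v _ hv), restrictEdges_of_adj hv]
  · rw [restrictEdges_of_adj hv,
      restrictEdges_apply_of_not_adj hm.1 (disjoint_left.1 h₂₃ v _ hv),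
      restrictEdges_apply_of_not_adj hm.1 (disjoint_left.1 h₁₂.symm v _ hv)]
  · rw [restrictEdges_of_not_adj (disjoint_left.1 h₂₃.symm v _ hv), restrictEdges_of_adj hv,
      restrictEdges_apply_of_not_adj hm.1 (disjoint_left.1 h₁₃.symm v _ hv)]

/-- `p` is the part of the previous matching still to be applied; it is merged with the
`E₁`-part of the first matching, and the roles of `E₁` and `E₂` swap at every step. -/
noncomputable def alternatingRoute (E₁ E₂ E₃ : SimpleGraph V) (p : V → V) :
    List (V → V) → List (V → V)
  | [] => [p]
  | m :: ms => (p ∘ restrictEdges E₁ m) :: restrictEdges E₃ m ::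
      alternatingRoute E₂ E₁ E₃ (restrictEdges E₂ m) ms

lemma length_alternatingRoute (E₁ E₂ E₃ : SimpleGraph V) (p : V → V) (ms : List (V → V)) :
    (alternatingRoute E₁ E₂ E₃ p ms).length = 2 * ms.length + 1 := by
  induction ms generalizing E₁ E₂ p with
  | nil => rfl
  | cons m ms ih => simp only [alternatingRoute, List.length_cons, ih]; ring

lemma foldr_comp_alternatingRoute (h₁₂ : Disjoint E₁ E₂) (h₁₃ : Disjoint E₁ E₃)
    (h₂₃ : Disjoint E₂ E₃) (p : V → V) (ms : List (V → V))
    (hms : ∀ m ∈ ms, IsMatchingPerm (E₁ ⊔ E₂ ⊔ E₃) m) :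
    (alternatingRoute E₁ E₂ E₃ p ms).foldr (· ∘ ·) id = p ∘ ms.foldr (· ∘ ·) id := by
  induction ms generalizing E₁ E₂ p with
  | nil => rfl
  | cons m ms ih =>
    have hm := hms m List.mem_cons_self
    have ih' := ih h₁₂.symm h₂₃ h₁₃ (restrictEdges E₂ m) fun m' hm' => by
      rw [sup_comm E₂]; exact hms m' (List.mem_cons_of_mem m hm')
    simp only [alternatingRoute, List.foldr_cons, ih']
    exact congrArg (fun q => p ∘ q ∘ ms.foldr (· ∘ ·) id)
      (restrictEdges_comp_comp h₁₂ h₁₃ h₂₃ hm)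

lemma isMatchingPerm_alternatingRoute_getElem (hE₁ : ∀ v, (E₁.neighborSet v).Subsingleton)
    (hE₂ : ∀ v, (E₂.neighborSet v).Subsingleton) (hp : IsMatchingPerm E₁ p)
    (ms : List (V → V)) (hms : ∀ m ∈ ms, Function.Involutive m)
    (hchain : ms.IsChain NoCommonEdge)
    (hhead : ∀ m ∈ ms.head?, ∀ v, p v = v ∨ restrictEdges E₁ m v = v)
    (j : ℕ) (hj : j < (alternatingRoute E₁ E₂ E₃ p ms).length) :
    (j % 4 = 0 → IsMatchingPerm E₁ (alternatingRoute E₁ E₂ E₃ p ms)[j]) ∧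
    (j % 4 = 2 → IsMatchingPerm E₂ (alternatingRoute E₁ E₂ E₃ p ms)[j]) ∧
    (j % 2 = 1 → IsMatchingPerm E₃ (alternatingRoute E₁ E₂ E₃ p ms)[j]) := by
  induction ms generalizing E₁ E₂ p j with
  | nil =>
    obtain rfl : j = 0 := by simpa [alternatingRoute] using hj
    exact ⟨fun _ => hp, by omega, by omega⟩
  | cons m ms ih =>
    have hm := hms m List.mem_cons_self
    obtain ⟨hnext, hchain'⟩ := List.isChain_cons.1 hchain
    match j, hj with
    | 0, _ => exact ⟨fun _ => hp.comp (isMatchingPerm_restrictEdges hm) (hhead m rfl), by omega,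
        by omega⟩
    | 1, _ => exact ⟨by omega, by omega, fun _ => isMatchingPerm_restrictEdges hm⟩
    | j + 2, hj =>
      obtain ⟨h₀, h₂, h₁⟩ := ih hE₂ hE₁ (isMatchingPerm_restrictEdges hm)
        (fun m' hm' => hms m' (List.mem_cons_of_mem m hm')) hchain'
        (fun m' hm' => (hnext m' hm').restrictEdges hE₂) j
        (by simpa [alternatingRoute] using hj)
      exact ⟨fun h => h₂ (by omega), fun h => h₀ (by omega), fun h => h₁ (by omega)⟩

theorem Solves.exists_alternating (hE₁ : ∀ v, (E₁.neighborSet v).Subsingleton)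
    (hE₂ : ∀ v, (E₂.neighborSet v).Subsingleton) (h₁₂ : Disjoint E₁ E₂) (h₁₃ : Disjoint E₁ E₃)
    (h₂₃ : Disjoint E₂ E₃) (hG : E₁ ⊔ E₂ ⊔ E₃ = G) {σ : V → V} {ms : List (V → V)}
    (hms : Solves G σ ms) (hchain : ms.IsChain NoCommonEdge) :
    ∃ ms' : List (V → V), ms'.length = 2 * ms.length + 1 ∧ Solves G σ ms' ∧
      ∀ (j : ℕ) (hj : j < ms'.length),
        (j % 4 = 0 → IsMatchingPerm E₁ ms'[j]) ∧
        (j % 4 = 2 → IsMatchingPerm E₂ ms'[j]) ∧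
        (j % 2 = 1 → IsMatchingPerm E₃ ms'[j]) := by
  subst hG
  have hclass := isMatchingPerm_alternatingRoute_getElem (E₃ := E₃) hE₁ hE₂
    (p := id) ⟨fun _ => rfl, fun _ => Or.inl rfl⟩ ms (fun m hm => (hms.1 m hm).1) hchain
    (fun _ _ _ => Or.inl rfl)
  refine ⟨alternatingRoute E₁ E₂ E₃ id ms, length_alternatingRoute .., ⟨fun m hm => ?_, ?_⟩,
    hclass⟩
  · obtain ⟨j, hj, rfl⟩ := List.mem_iff_getElem.1 hm
    obtain ⟨h₀, h₂, h₁⟩ := hclass j hj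
    rcases (by omega : j % 4 = 0 ∨ j % 4 = 2 ∨ j % 2 = 1) with h | h | h
    · exact (h₀ h).mono (le_sup_left.trans le_sup_left)
    · exact (h₂ h).mono (le_sup_right.trans le_sup_left)
    · exact (h₁ h).mono le_sup_right
  · rw [routeSeq, foldr_comp_alternatingRoute h₁₂ h₁₃ h₂₃ id ms hms.1]
    exact hms.2

end MatchingDecomposition

section Cycle

open SimpleGraph (fromRel fromRel_adj sup_adj disjoint_left mem_neighborSet)

variable {n : ℕ}

def cycleEvenEdges (n : ℕ) : SimpleGraph (Fin n) :=
  fromRel fun v w => v.val % 2 = 0 ∧ w.val = v.val + 1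

def cycleOddEdges (n : ℕ) : SimpleGraph (Fin n) :=
  fromRel fun v w => v.val % 2 = 1 ∧ w.val = v.val + 1

def cycleWrapEdge (n : ℕ) : SimpleGraph (Fin n) :=
  fromRel fun v w => v.val = n - 1 ∧ w.val = 0

lemma Fin.val_add_one_mod_eq_iff {v w : Fin n} :
    (v.val + 1) % n = w.val ↔ w.val = v.val + 1 ∨ (v.val = n - 1 ∧ w.val = 0) := by
  have hv := v.isLt
  have hw := w.isLt
  rcases (by omega : v.val + 1 < n ∨ v.val + 1 = n) with h | h
  · rw [Nat.mod_eq_of_lt h]; omega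
  · rw [h, Nat.mod_self]; omega

lemma cycleEvenEdges_sup_cycleOddEdges_sup_cycleWrapEdge :
    cycleEvenEdges n ⊔ cycleOddEdges n ⊔ cycleWrapEdge n = cycleGraph n := by
  ext v w
  have hv := v.isLt
  have hw := w.isLt
  simp only [cycleEvenEdges, cycleOddEdges, cycleWrapEdge, cycleGraph, sup_adj, fromRel_adj,
    ne_eq, Fin.ext_iff]
  rw [Fin.val_add_one_mod_eq_iff, Fin.val_add_one_mod_eq_iff]
  omega

lemma cycleEvenEdges_neighborSet_subsingleton (v : Fin n) :
    ((cycleEvenEdges n).neighborSet v).Subsingleton := fun w hw w' hw' => by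
  simp only [cycleEvenEdges, mem_neighborSet, fromRel_adj] at hw hw'
  ext; omega

lemma cycleOddEdges_neighborSet_subsingleton (v : Fin n) :
    ((cycleOddEdges n).neighborSet v).Subsingleton := fun w hw w' hw' => by
  simp only [cycleOddEdges, mem_neighborSet, fromRel_adj] at hw hw'
  ext; omega

lemma disjoint_cycleEvenEdges_cycleOddEdges : Disjoint (cycleEvenEdges n) (cycleOddEdges n) :=
  disjoint_left.2 fun v w h h' => by
    simp only [cycleEvenEdges, cycleOddEdges, fromRel_adj] at h h'
    omega

lemma disjoint_cycleEvenEdges_cycleWrapEdge (hn : 3 ≤ n) :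
    Disjoint (cycleEvenEdges n) (cycleWrapEdge n) :=
  disjoint_left.2 fun v w h h' => by
    simp only [cycleEvenEdges, cycleWrapEdge, fromRel_adj] at h h'
    omega

lemma disjoint_cycleOddEdges_cycleWrapEdge (hn : 3 ≤ n) :
    Disjoint (cycleOddEdges n) (cycleWrapEdge n) :=
  disjoint_left.2 fun v w h h' => by
    simp only [cycleOddEdges, cycleWrapEdge, fromRel_adj] at h h'
    omega

lemma SubE1.of_isMatchingPerm {m : Fin n → Fin n} (hm : IsMatchingPerm (cycleEvenEdges n) m) :
    SubE1 n m :=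
  ⟨hm.1, fun v => (hm.2 v).imp_right fun h => (fromRel_adj _ _ _).1 h |>.2⟩

lemma SubE2.of_isMatchingPerm {m : Fin n → Fin n} (hm : IsMatchingPerm (cycleOddEdges n) m) :
    SubE2 n m :=
  ⟨hm.1, fun v => (hm.2 v).imp_right fun h => (fromRel_adj _ _ _).1 h |>.2⟩

lemma SubE3.of_isMatchingPerm {m : Fin n → Fin n} (hm : IsMatchingPerm (cycleWrapEdge n) m) :
    SubE3 n m :=
  ⟨hm.1, fun v => (hm.2 v).imp_right fun h => (fromRel_adj _ _ _).1 h |>.2.imp id And.symm⟩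

end Cycle

/-- on the odd cycle of length `n = 2r+1 ≥ 5`, any solution `(M₁, …, M_k)`
in which consecutive matchings share no edge can be converted into an
`(E₁, E₃, E₂, E₃)`-alternating solution of length at most `2k + 1`: the matchings in
positions `4j+1` are subsets of `E₁`, those in positions `4j+3` are subsets of `E₂`, and
those in even positions are subsets of `E₃`. -/
theorem stmt_14 (n : ℕ) (hn : 5 ≤ n) (C : Fin n ≃ Fin n)
    (ms : List (Fin n → Fin n)) (hms : Solves (cycleGraph n) (⇑C) ms)
    (hdisj : ∀ (i : ℕ) (h : i + 1 < ms.length) (v : Fin n),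
      (ms[i]'(by omega)) v = v ∨ (ms[i + 1]'h) v ≠ (ms[i]'(by omega)) v) :
    ∃ ms' : List (Fin n → Fin n),
      ms'.length ≤ 2 * ms.length + 1 ∧
      Solves (cycleGraph n) (⇑C) ms' ∧
      ∀ j : Fin ms'.length,
        (j.val % 4 = 0 → SubE1 n (ms'.get j)) ∧
        (j.val % 4 = 2 → SubE2 n (ms'.get j)) ∧
        (j.val % 2 = 1 → SubE3 n (ms'.get j)) := by
  have hn3 : 3 ≤ n := by omega
  obtain ⟨ms', hlen, hsolves, hclass⟩ := hms.exists_alternating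
    cycleEvenEdges_neighborSet_subsingleton cycleOddEdges_neighborSet_subsingleton
    disjoint_cycleEvenEdges_cycleOddEdges (disjoint_cycleEvenEdges_cycleWrapEdge hn3)
    (disjoint_cycleOddEdges_cycleWrapEdge hn3) cycleEvenEdges_sup_cycleOddEdges_sup_cycleWrapEdge
    (List.isChain_iff_getElem.2 hdisj)
  refine ⟨ms', hlen.le, hsolves, fun j => ?_⟩
  obtain ⟨h₀, h₂, h₁⟩ := hclass j j.isLt
  exact ⟨fun h => .of_isMatchingPerm (h₀ h), fun h => .of_isMatchingPerm (h₂ h),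
    fun h => .of_isMatchingPerm (h₁ h)⟩
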